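/- (Decomposition (2.4) in the proof of the 0-2 law.) Let A be a unital C*-algebra and P : A → A a bounded linear map that is unital (P 1 = 1) and positive.ical Suppose there exist natural numbers m, k ≥ 1 and a bounded positive linear map S : A → A such that S 1 is invertible in A and both P^{m+k} − S and P^m − S are positive maps. Set h = m + k. Then for all integers i, j ≥ 1 there exist bounded positive linear maps S_{ij}, T_j : A → A such that P^{i·j·h} = S_{ij} ∘ (id + P^k)^j + (T_j)^i, the element S_{ij} 1 is invertible in A, ‖S_{ij}‖ ≤ 2^{−j}, and ‖T_j‖ < 1. -/

import Mathlib

/-!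
Write `h = m + k` and `C = 1 + P^k`. Since `S ≤ P^h` and `S ∘ P^k ≤ P^m ∘ P^k = P^h`, the map
`P^h - (S/2) C` is positive, and since `C` commutes with `P`, so is `T_j = P^{jh} - (S/2)^j C^j`.
Telescoping `Q^i` for `Q = P^{jh} = (S/2)^j C^j + T_j` gives `P^{ijh} = S_{ij} C^j + T_j^i` with
`S_{ij} = ∑_{l<i} T_j^l (S/2)^j Q^{i-1-l}`, again positive. At `1` we have `P^n 1 = 1` and
`C^j 1 = 2^j`, so `T_j 1 = 1 - S^j 1 ≤ 1 - δ^j`, where `δ > 0` bounds the invertible positive `S 1`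
from below, and `2^j S_{ij} 1 = 1 - T_j^i 1`.

The norm estimates then come from `‖φ‖ = ‖φ 1‖` for positive `φ`. For a normal contraction `a`,
the functional calculus approximates `a` by `∑ zᵢ eᵢ` with `eᵢ ≥ 0`, `∑ eᵢ = 1` and `|zᵢ| ≤ 1`, and
Cauchy–Schwarz in a Hilbert module bounds `‖∑ zᵢ φ eᵢ‖` by `‖φ 1‖`; this covers the unitaries, and
by Russo–Dye the closed unit ball is the closed convex hull of the unitaries.
-/

open Finset Metric Filter Topology
open scoped ComplexOrder

lemma pow_eq_sum_mul_add_pow {R : Type*} [Semiring R] {x y d c : R} (hx : x = d * c + y)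
    (hc : Commute c x) (n : ℕ) :
    x ^ n = (∑ l ∈ range n, y ^ l * d * x ^ (n - 1 - l)) * c + y ^ n := by
  induction n with
  | zero => simp
  | succ n ih =>
    have hsum : ∑ l ∈ range (n + 1), y ^ l * d * x ^ (n + 1 - 1 - l) =
        y * ∑ l ∈ range n, y ^ l * d * x ^ (n - 1 - l) + d * x ^ n := by
      rw [sum_range_succ', mul_sum]
      congr 1
      · refine sum_congr rfl fun l _ => ?_
        rw [pow_succ', mul_assoc, mul_assoc, mul_assoc,
          show n + 1 - 1 - (l + 1) = n - 1 - l by omega]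
      · simp
    calc x ^ (n + 1) = (d * c + y) * x ^ n := by rw [pow_succ', ← hx]
      _ = d * (x ^ n * c) + y * x ^ n := by rw [add_mul, mul_assoc, (hc.pow_right n).eq]
      _ = _ := by rw [hsum, ih, pow_succ']; noncomm_ring

lemma commute_one_add_pow_pow {R : Type*} [Semiring R] (a : R) (k n : ℕ) :
    Commute (1 + a ^ k) (a ^ n) :=
  (Commute.one_left _).add_left ((Commute.refl a).pow_pow k n)

section PositiveMap

variable {E : Type*} [NormedAddCommGroup E] [NormedSpace ℂ E]

lemma ContinuousLinearMap.pow_apply_eq_self {φ : E →L[ℂ] E} {x : E} (hx : φ x = x) (n : ℕ) :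
    (φ ^ n) x = x := by
  rw [FunLike.coe_pow_eq_iterate]
  exact Function.iterate_fixed hx n

lemma ContinuousLinearMap.smul_pow_apply (c : ℝ) (φ : E →L[ℂ] E) (j : ℕ) (x : E) :
    ((c • φ) ^ j) x = c ^ j • (φ ^ j) x := by
  induction j with
  | zero => simp
  | succ j ih =>
    rw [pow_succ', mul_apply_eq_comp, ih, smul_apply, ContinuousLinearMap.map_smul_of_tower,
      smul_smul, ← pow_succ', pow_succ' φ, mul_apply_eq_comp]

variable [PartialOrder E]

def IsPositiveMap (φ : E →L[ℂ] E) : Prop := ∀ x, 0 ≤ x → 0 ≤ φ x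

namespace IsPositiveMap

variable {φ ψ : E →L[ℂ] E}

lemma one : IsPositiveMap (1 : E →L[ℂ] E) := fun _ hx => hx

lemma mul (hφ : IsPositiveMap φ) (hψ : IsPositiveMap ψ) : IsPositiveMap (φ * ψ) :=
  fun x hx => hφ _ (hψ x hx)

lemma pow (hφ : IsPositiveMap φ) (n : ℕ) : IsPositiveMap (φ ^ n) := by
  induction n with
  | zero => exact one
  | succ n ih => rw [pow_succ]; exact ih.mul hφ

lemma smul [PosSMulMono ℝ E] (hφ : IsPositiveMap φ) {c : ℝ} (hc : 0 ≤ c) :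
    IsPositiveMap (c • φ) := fun x hx => by
  rw [smul_apply]
  exact smul_nonneg hc (hφ x hx)

variable [IsOrderedAddMonoid E]

lemma monotone (hφ : IsPositiveMap φ) : Monotone φ := fun x y hxy => by
  simpa [sub_nonneg] using hφ (y - x) (sub_nonneg.2 hxy)

lemma add (hφ : IsPositiveMap φ) (hψ : IsPositiveMap ψ) : IsPositiveMap (φ + ψ) :=
  fun x hx => add_nonneg (hφ x hx) (hψ x hx)

lemma sum {ι : Type*} {s : Finset ι} {φ : ι → E →L[ℂ] E} (hφ : ∀ i ∈ s, IsPositiveMap (φ i)) :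
    IsPositiveMap (∑ i ∈ s, φ i) := fun x hx => by
  rw [_root_.sum_apply]
  exact Finset.sum_nonneg fun i hi => hφ i hi x hx

lemma pow_sub_pow_mul_pow {X D C : E →L[ℂ] E} (hX : IsPositiveMap X) (hD : IsPositiveMap D)
    (hC : IsPositiveMap C) (hXDC : IsPositiveMap (X - D * C)) (hCX : Commute C X) (j : ℕ) :
    IsPositiveMap (X ^ j - D ^ j * C ^ j) := by
  induction j with
  | zero => intro x _; simp
  | succ j ih =>
    have hstep : X ^ (j + 1) - D ^ (j + 1) * C ^ (j + 1) =
        (X ^ j - D ^ j * C ^ j) * X + D ^ j * (X - D * C) * C ^ j := by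
      have hDXC : D ^ j * X * C ^ j = D ^ j * C ^ j * X := by
        rw [mul_assoc, mul_assoc, (hCX.pow_left j).eq]
      rw [pow_succ X, pow_succ D, pow_succ' C]
      simp only [mul_sub, sub_mul]
      rw [hDXC]
      noncomm_ring
    rw [hstep]
    exact (ih.mul hX).add (((hD.pow j).mul hXDC).mul (hC.pow j))

end IsPositiveMap

end PositiveMap

section CStarAlgebra

variable {A : Type*} [CStarAlgebra A]

lemma norm_le_one_of_mem_unitary {u : A} (hu : u ∈ unitary A) : ‖u‖ ≤ 1 := by
  nontriviality A
  exact (CStarRing.norm_of_mem_unitary hu).le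

variable [PartialOrder A] [StarOrderedRing A]

/-- Cauchy–Schwarz in the Hilbert `A`-module `A^ι`, applied to `(√(a i))ᵢ` and `(z i • √(a i))ᵢ`. -/
lemma norm_sum_smul_le_norm_sum {ι : Type*} [Fintype ι] (a : ι → A) (z : ι → ℂ)
    (ha : ∀ i, 0 ≤ a i) (hz : ∀ i, ‖z i‖ ≤ 1) : ‖∑ i, z i • a i‖ ≤ ‖∑ i, a i‖ := by
  set c : ι → A := fun i => CFC.sqrt (a i)
  have hc : ∀ i, c i * star (c i) = a i := fun i => by
    rw [(CFC.sqrt_nonneg (a i)).isSelfAdjoint.star_eq, CFC.sqrt_mul_sqrt_self _ (ha i)]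
  let X : WithCStarModule A (ι → A) := WithCStarModule.equiv A _ |>.symm c
  let Y : WithCStarModule A (ι → A) := WithCStarModule.equiv A _ |>.symm fun i => z i • c i
  have hXY : inner A X Y = ∑ i, z i • a i := by
    simp only [WithCStarModule.pi_inner]
    refine Finset.sum_congr rfl fun i _ => ?_
    show z i • c i * star (c i) = _
    rw [smul_mul_assoc, hc]
  have hXX : inner A X X = ∑ i, a i := by
    simp only [WithCStarModule.pi_inner]
    exact Finset.sum_congr rfl fun i _ => hc i
  have hYY : inner A Y Y ≤ ∑ i, a i := by
    simp only [WithCStarModule.pi_inner]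
    refine Finset.sum_le_sum fun i _ => ?_
    show z i • c i * star (z i • c i) ≤ a i
    rw [star_smul, smul_mul_smul_comm, hc, RCLike.star_def, Complex.mul_conj,
      Complex.normSq_eq_norm_sq, Complex.coe_smul]
    calc ‖z i‖ ^ 2 • a i ≤ (1 : ℝ) • a i :=
          smul_le_smul_of_nonneg_right (pow_le_one₀ (norm_nonneg _) (hz i)) (ha i)
      _ = a i := one_smul ℝ _
  have hnormX : ‖X‖ = √‖∑ i, a i‖ := by
    rw [CStarModule.norm_eq_sqrt_norm_inner_self (A := A), hXX]
  have hnormY : ‖Y‖ ≤ √‖∑ i, a i‖ := by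
    rw [CStarModule.norm_eq_sqrt_norm_inner_self (A := A)]
    exact Real.sqrt_le_sqrt
      (CStarAlgebra.norm_le_norm_of_nonneg_of_le CStarModule.inner_self_nonneg hYY)
  calc ‖∑ i, z i • a i‖ = ‖inner A X Y‖ := by rw [hXY]
    _ ≤ ‖X‖ * ‖Y‖ := CStarModule.norm_inner_le _
    _ ≤ √‖∑ i, a i‖ * √‖∑ i, a i‖ := by rw [hnormX]; gcongr
    _ = ‖∑ i, a i‖ := Real.mul_self_sqrt (norm_nonneg _)

lemma IsStarNormal.exists_norm_sub_sum_smul_le (a : A) [IsStarNormal a] {ε : ℝ} (hε : 0 < ε) :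
    ∃ (t : Finset ℂ) (e : t → A), (∀ z : t, (z : ℂ) ∈ spectrum ℂ a) ∧ (∀ z, 0 ≤ e z) ∧
      ∑ z, e z = 1 ∧ ‖a - ∑ z : t, (z : ℂ) • e z‖ ≤ ε := by
  obtain ⟨t, htK, hcover⟩ := (spectrum.isCompact a).elim_nhds_subcover (fun z : ℂ => ball z ε)
    fun z _ => ball_mem_nhds z hε
  obtain ⟨f, hf⟩ := PartitionOfUnity.exists_isSubordinate (spectrum.isCompact a).isClosed
    (fun z : t => ball (z : ℂ) ε) (fun _ => isOpen_ball)
    (by simpa [Set.iUnion_subtype] using hcover)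
  have hsum : ∀ w ∈ spectrum ℂ a, ∑ z, f z w = 1 := fun w hw => by
    rw [← finsum_eq_sum_of_fintype, f.sum_eq_one hw]
  have hnear : ∀ z w, f z w ≠ 0 → ‖w - z‖ < ε := fun z w hw => by
    simpa [dist_eq_norm] using hf z (subset_tsupport _ hw)
  refine ⟨t, fun z => cfc (fun w => (f z w : ℂ)) a, fun z => htK z z.2,
    fun z => cfc_nonneg fun w _ => by simpa using f.nonneg z w, ?_, ?_⟩
  · rw [← cfc_sum .., ← cfc_one ℂ a]
    refine cfc_congr fun w hw => ?_
    simp only [Finset.sum_apply, Pi.one_apply]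
    exact_mod_cast hsum w hw
  · set g : t → ℂ → ℂ := fun z w => (f z w : ℂ)
    have hg : ∀ z, Continuous (g z) := fun z => Complex.continuous_ofReal.comp (f z).continuous
    have hsmul : ∑ z : t, (z : ℂ) • cfc (g z) a = cfc (fun w => ∑ z : t, (z : ℂ) * g z w) a := by
      rw [← Finset.sum_fn, cfc_sum_univ (fun (z : t) w => (z : ℂ) * g z w) a
        fun z => (continuous_const.mul (hg z)).continuousOn]
      exact Finset.sum_congr rfl fun z _ => (cfc_const_mul _ _ a (hg z).continuousOn).symm
    have hdiff :
        a - ∑ z : t, (z : ℂ) • cfc (g z) a = cfc (fun w => ∑ z : t, g z w * (w - z)) a := by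
      have hcont : Continuous fun w => ∑ z : t, (z : ℂ) * g z w :=
        continuous_finsetSum _ fun z _ => continuous_const.mul (hg z)
      nth_rewrite 1 [← cfc_id' ℂ a]
      rw [hsmul, ← cfc_sub (fun w => w) _ a continuousOn_id hcont.continuousOn]
      refine cfc_congr fun w hw => ?_
      have hgw : ∑ z, g z w = 1 := by
        show ∑ z, ((f z w : ℝ) : ℂ) = 1
        exact_mod_cast hsum w hw
      have hexp : ∑ z, g z w * (w - z) = (∑ z, g z w) * w - ∑ z : t, (z : ℂ) * g z w := by
        rw [Finset.sum_mul, ← Finset.sum_sub_distrib]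
        exact Finset.sum_congr rfl fun z _ => by ring
      rw [hexp, hgw, one_mul]
    rw [hdiff]
    refine norm_cfc_le hε.le fun w hw => ?_
    calc ‖∑ z, g z w * (w - z)‖ ≤ ∑ z, f z w * ε := by
          refine (norm_sum_le _ _).trans (Finset.sum_le_sum fun z _ => ?_)
          rw [norm_mul, Complex.norm_real, Real.norm_of_nonneg (f.nonneg z w)]
          by_cases hz : f z w = 0
          · simp [hz]
          · exact mul_le_mul_of_nonneg_left (hnear z w hz).le (f.nonneg z w)
      _ = ε := by rw [← Finset.sum_mul, hsum w hw, one_mul]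

lemma IsPositiveMap.norm_apply_le_of_isStarNormal {φ : A →L[ℂ] A} (hφ : IsPositiveMap φ) {a : A}
    [IsStarNormal a] (ha : ‖a‖ ≤ 1) : ‖φ a‖ ≤ ‖φ 1‖ := by
  nontriviality A
  refine le_of_forall_pos_le_add fun δ hδ => ?_
  obtain ⟨t, e, hspec, he, hsum, happrox⟩ :=
    IsStarNormal.exists_norm_sub_sum_smul_le a (ε := δ / (‖φ‖ + 1)) (by positivity)
  have hz : ∀ z : t, ‖(z : ℂ)‖ ≤ 1 := fun z => (spectrum.norm_le_norm_of_mem (hspec z)).trans ha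
  have hsplit : φ a = φ (a - ∑ z : t, (z : ℂ) • e z) + ∑ z : t, (z : ℂ) • φ (e z) := by
    simp only [map_sub, map_sum, map_smul, sub_add_cancel]
  calc ‖φ a‖ ≤ ‖φ‖ * (δ / (‖φ‖ + 1)) + ‖∑ z, φ (e z)‖ := by
        rw [hsplit]
        exact norm_add_le_of_le (φ.le_opNorm_of_le happrox)
          (norm_sum_smul_le_norm_sum _ _ (fun z => hφ _ (he z)) hz)
    _ ≤ ‖φ 1‖ + δ := by
        rw [← map_sum, hsum, add_comm]
        gcongr
        rw [mul_div_assoc']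
        exact div_le_of_le_mul₀ (by positivity) hδ.le (by nlinarith [norm_nonneg φ])

lemma IsUnit.exists_mem_unitary_eq_mul_abs {x : A} (hx : IsUnit x) :
    ∃ w ∈ unitary A, x = w * CFC.abs x := by
  obtain ⟨b, hb⟩ : IsUnit (CFC.abs x) :=
    (CFC.isUnit_sqrt_iff _ (star_mul_self_nonneg x)).2 (hx.star.mul hx)
  have hbsa : star (b : A) = b := hb ▸ (CFC.abs_nonneg x).isSelfAdjoint.star_eq
  have hbinv : star (↑b⁻¹ : A) * b = 1 := by
    rw [← hbsa, ← star_mul, Units.mul_inv, star_one]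
  refine ⟨x * ↑b⁻¹, (hx.mul b⁻¹.isUnit).mem_unitary_of_star_mul_self ?_, by simp [← hb]⟩
  calc star (x * ↑b⁻¹) * (x * ↑b⁻¹) = star (↑b⁻¹ : A) * (star x * x) * ↑b⁻¹ := by
        rw [star_mul]; noncomm_ring
    _ = 1 := by
        rw [← CFC.abs_mul_abs, ← hb, ← mul_assoc, hbinv, one_mul, Units.mul_inv]

lemma mem_convexHull_unitary_of_isUnit {x : A} (hx : IsUnit x) (hx1 : ‖x‖ ≤ 1) :
    x ∈ convexHull ℝ (unitary A : Set A) := by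
  obtain ⟨w, hw, hxw⟩ := hx.exists_mem_unitary_eq_mul_abs
  set v := selfAdjoint.unitarySelfAddISMul ⟨CFC.abs x, (CFC.abs_nonneg x).isSelfAdjoint⟩
    (by simpa [CFC.norm_abs] using hx1)
  have habs : CFC.abs x = (2⁻¹ : ℝ) • ((v : A) + star (v : A)) := by
    rw [← realPart_apply_coe, selfAdjoint.realPart_unitarySelfAddISMul]
  have hx : x = (2⁻¹ : ℝ) • (w * v) + (2⁻¹ : ℝ) • (w * star (v : A)) := by
    rw [hxw, habs, mul_smul_comm, mul_add, smul_add]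
  rw [hx]
  exact convex_convexHull ℝ _ (subset_convexHull ℝ _ (mul_mem hw v.2))
    (subset_convexHull ℝ _ (mul_mem hw (Unitary.star_mem v.2))) (by norm_num) (by norm_num)
    (by norm_num)

lemma homothety_image_unitary_subset_convexHull {y : A} (hy : ‖y‖ < 1) :
    AffineMap.homothety y (2⁻¹ : ℝ) '' (unitary A : Set A) ⊆ convexHull ℝ (unitary A : Set A) := by
  rintro _ ⟨v, hv, rfl⟩
  have hval : AffineMap.homothety y (2⁻¹ : ℝ) v = (2⁻¹ : ℝ) • (v + y) := by
    simp only [AffineMap.homothety_apply, vsub_eq_sub, vadd_eq_add]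
    module
  have hunit : IsUnit (v + y) := by
    have hsmall : ‖-(star v * y)‖ < 1 := by
      rwa [norm_neg, CStarRing.norm_mem_unitary_mul y (Unitary.star_mem hv)]
    have hfactor : v + y = v * (1 - -(star v * y)) := by
      rw [sub_neg_eq_add, mul_add, mul_one, ← mul_assoc, Unitary.mul_star_self_of_mem hv, one_mul]
    rw [hfactor]
    exact (Unitary.isUnit_coe (U := ⟨v, hv⟩)).mul (Units.oneSub _ hsmall).isUnit
  rw [hval]
  refine mem_convexHull_unitary_of_isUnit ?_ ?_
  · exact (isUnit_smul_iff (Units.mk0 (2⁻¹ : ℝ) (by norm_num)) _).2 hunit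
  · rw [norm_smul, Real.norm_of_nonneg (by norm_num)]
    linarith [norm_add_le v y, norm_le_one_of_mem_unitary hv]

/-- The Russo–Dye theorem. -/
theorem closedBall_subset_closure_convexHull_unitary :
    closedBall (0 : A) 1 ⊆ closure (convexHull ℝ (unitary A : Set A)) := by
  suffices hball : ball (0 : A) 1 ⊆ closure (convexHull ℝ (unitary A : Set A)) by
    rw [← closure_ball (0 : A) one_ne_zero]
    exact closure_minimal hball isClosed_closure
  intro y hy
  rw [mem_ball_zero_iff] at hy
  set g := AffineMap.homothety y (2⁻¹ : ℝ)
  have hg : Set.MapsTo g (convexHull ℝ (unitary A : Set A)) (convexHull ℝ (unitary A : Set A)) := by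
    rw [Set.mapsTo_iff_image_subset, g.image_convexHull]
    exact convexHull_min (homothety_image_unitary_subset_convexHull hy) (convex_convexHull ℝ _)
  -- `g` maps the hull into itself and contracts it towards its fixed point `y`.
  have hiter : ∀ n, g^[n] 1 = AffineMap.homothety y ((2⁻¹ : ℝ) ^ n) 1 := by
    intro n
    induction n with
    | zero => simp
    | succ n ih => rw [Function.iterate_succ_apply', ih, pow_succ', AffineMap.homothety_mul_apply]
  have hlim : Tendsto (fun n => g^[n] 1) atTop (𝓝 y) := by
    simp only [hiter, AffineMap.homothety_apply, vsub_eq_sub, vadd_eq_add]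
    have hpow := tendsto_pow_atTop_nhds_zero_of_lt_one (by norm_num) (by norm_num : (2⁻¹ : ℝ) < 1)
    simpa using (hpow.smul_const (1 - y)).add_const y
  exact mem_closure_of_tendsto hlim (Eventually.of_forall fun n =>
    hg.iterate n (subset_convexHull ℝ _ (one_mem (unitary A))))

lemma IsPositiveMap.opNorm_le_norm_apply_one {φ : A →L[ℂ] A} (hφ : IsPositiveMap φ) :
    ‖φ‖ ≤ ‖φ 1‖ := by
  refine φ.opNorm_le_of_unit_norm (norm_nonneg _) fun x hx => ?_
  set B := φ ⁻¹' closedBall 0 ‖φ 1‖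
  have hU : (unitary A : Set A) ⊆ B := fun u hu => by
    have := isStarNormal_of_mem_unitary hu
    simpa [B] using hφ.norm_apply_le_of_isStarNormal (norm_le_one_of_mem_unitary hu)
  have hB : Convex ℝ B := (convex_closedBall _ _).linear_preimage (φ.toLinearMap.restrictScalars ℝ)
  have hBc : IsClosed B := isClosed_closedBall.preimage φ.continuous
  simpa [B] using closure_minimal (convexHull_min hU hB) hBc
    (closedBall_subset_closure_convexHull_unitary (mem_closedBall_zero_iff.2 hx.le))

lemma IsPositiveMap.opNorm_le_of_apply_one_le {φ : A →L[ℂ] A} (hφ : IsPositiveMap φ) {r : ℝ}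
    (hr : 0 ≤ r) (h : φ 1 ≤ algebraMap ℝ A r) : ‖φ‖ ≤ r :=
  hφ.opNorm_le_norm_apply_one.trans
    ((CStarAlgebra.norm_le_iff_le_algebraMap _ hr (hφ 1 zero_le_one)).2 h)

lemma IsPositiveMap.exists_algebraMap_pow_le_pow_apply_one {S : A →L[ℂ] A} (hS : IsPositiveMap S)
    (hS1 : IsUnit (S 1)) : ∃ δ > 0, δ ≤ 1 ∧ ∀ j, algebraMap ℝ A (δ ^ j) ≤ (S ^ j) 1 := by
  rcases subsingleton_or_nontrivial A with _ | _
  · exact ⟨1, one_pos, le_rfl, fun j => (Subsingleton.elim _ _).le⟩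
  have hpos : IsStrictlyPositive (S 1) := hS1.isStrictlyPositive (hS 1 zero_le_one)
  obtain ⟨δ, hδ, hδS⟩ := (CFC.exists_pos_algebraMap_le_iff hpos.nonneg.isSelfAdjoint).2
    fun x hx => hpos.spectrum_pos hx
  refine ⟨min δ 1, lt_min hδ one_pos, min_le_right _ _, fun j => ?_⟩
  induction j with
  | zero => simp
  | succ j ih =>
    calc algebraMap ℝ A (min δ 1 ^ (j + 1)) = min δ 1 ^ j • algebraMap ℝ A (min δ 1) := by
          rw [pow_succ, map_mul, Algebra.smul_def, map_pow]
      _ ≤ min δ 1 ^ j • S 1 := by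
          gcongr
          exact (algebraMap_le_algebraMap.2 (min_le_left _ _)).trans hδS
      _ = S (algebraMap ℝ A (min δ 1 ^ j)) := by
          rw [Algebra.algebraMap_eq_smul_one, S.map_smul_of_tower]
      _ ≤ (S ^ (j + 1)) 1 := by
          rw [pow_succ']
          exact hS.monotone ih

end CStarAlgebra

namespace ZeroTwoLaw

variable {A : Type*} [CStarAlgebra A]

/-- The map `T_j` of the decomposition. -/
noncomputable def remainder (P S : A →L[ℂ] A) (m k j : ℕ) : A →L[ℂ] A :=
  P ^ (j * (m + k)) - ((2⁻¹ : ℝ) • S) ^ j * (1 + P ^ k) ^ j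

/-- The map `S_{ij}` of the decomposition. -/
noncomputable def leading (P S : A →L[ℂ] A) (m k i j : ℕ) : A →L[ℂ] A :=
  ∑ l ∈ range i, remainder P S m k j ^ l * ((2⁻¹ : ℝ) • S) ^ j * (P ^ (j * (m + k))) ^ (i - 1 - l)

variable {P S : A →L[ℂ] A} {m k : ℕ}

lemma pow_eq_leading_mul_add_remainder_pow (i j : ℕ) :
    P ^ (i * j * (m + k)) = leading P S m k i j * (1 + P ^ k) ^ j + remainder P S m k j ^ i := by
  rw [mul_assoc, pow_mul']
  exact pow_eq_sum_mul_add_pow (by rw [remainder, add_sub_cancel])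
    ((commute_one_add_pow_pow P k _).pow_left j) i

lemma one_add_pow_pow_apply_one (hP1 : P 1 = 1) (j : ℕ) :
    ((1 + P ^ k) ^ j) 1 = (2 : ℝ) ^ j • (1 : A) := by
  have hC : (1 + P ^ k) 1 = (2 : ℝ) • (1 : A) := by
    simp [ContinuousLinearMap.pow_apply_eq_self hP1, two_smul]
  induction j with
  | zero => simp
  | succ j ih =>
    rw [pow_succ, mul_apply_eq_comp, hC, ContinuousLinearMap.map_smul_of_tower, ih, smul_smul,
      pow_succ']

lemma remainder_apply_one (hP1 : P 1 = 1) (j : ℕ) : remainder P S m k j 1 = 1 - (S ^ j) 1 := by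
  rw [remainder, sub_apply, mul_apply_eq_comp, ContinuousLinearMap.pow_apply_eq_self hP1,
    one_add_pow_pow_apply_one hP1, ContinuousLinearMap.map_smul_of_tower,
    ContinuousLinearMap.smul_pow_apply, smul_smul, ← mul_pow]
  norm_num

lemma leading_apply_one (hP1 : P 1 = 1) (i j : ℕ) :
    leading P S m k i j 1 = (2⁻¹ : ℝ) ^ j • (1 - (remainder P S m k j ^ i) 1) := by
  have h := congrArg (· 1)
    (pow_eq_leading_mul_add_remainder_pow (P := P) (S := S) (m := m) (k := k) i j)
  simp only [add_apply, mul_apply_eq_comp, ContinuousLinearMap.pow_apply_eq_self hP1,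
    one_add_pow_pow_apply_one hP1, ContinuousLinearMap.map_smul_of_tower] at h
  rw [← eq_sub_of_add_eq h.symm, inv_pow, inv_smul_smul₀ (by positivity)]

lemma isUnit_leading_apply_one (hP1 : P 1 = 1) {i j : ℕ} (hi : 1 ≤ i)
    (hT : ‖remainder P S m k j‖ < 1) : IsUnit (leading P S m k i j 1) := by
  nontriviality A
  have hsmall : ‖(remainder P S m k j ^ i) 1‖ < 1 :=
    calc ‖(remainder P S m k j ^ i) 1‖ ≤ ‖remainder P S m k j ^ i‖ := by
          simpa using (remainder P S m k j ^ i).le_opNorm 1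
      _ ≤ ‖remainder P S m k j‖ ^ i := norm_pow_le' _ hi
      _ < 1 := pow_lt_one₀ (norm_nonneg _) hT (by omega)
  rw [leading_apply_one hP1]
  exact (isUnit_smul_iff (Units.mk0 ((2⁻¹ : ℝ) ^ j) (by positivity)) _).2
    (Units.oneSub _ hsmall).isUnit

variable [PartialOrder A] [StarOrderedRing A]

lemma isPositiveMap_sub_half_mul (hP : IsPositiveMap P)
    (h1 : ∀ x : A, 0 ≤ x → S x ≤ (P ^ (m + k)) x) (h2 : ∀ x : A, 0 ≤ x → S x ≤ (P ^ m) x) :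
    IsPositiveMap (P ^ (m + k) - (2⁻¹ : ℝ) • S * (1 + P ^ k)) := fun x hx => by
  have hPk : S ((P ^ k) x) ≤ (P ^ (m + k)) x := by
    rw [pow_add]
    exact h2 _ (hP.pow k x hx)
  have : (2⁻¹ : ℝ) • (S x + S ((P ^ k) x)) ≤ (P ^ (m + k)) x := by
    calc (2⁻¹ : ℝ) • (S x + S ((P ^ k) x)) ≤ (2⁻¹ : ℝ) • ((P ^ (m + k)) x + (P ^ (m + k)) x) := by
          gcongr
          exact h1 x hx
      _ = (P ^ (m + k)) x := by module
  simpa [sub_nonneg] using this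

lemma isPositiveMap_remainder (hP : IsPositiveMap P) (hS : IsPositiveMap S)
    (hbase : IsPositiveMap (P ^ (m + k) - (2⁻¹ : ℝ) • S * (1 + P ^ k))) (j : ℕ) :
    IsPositiveMap (remainder P S m k j) := by
  rw [remainder, pow_mul']
  exact (hP.pow _).pow_sub_pow_mul_pow (hS.smul (by norm_num)) (IsPositiveMap.one.add (hP.pow k))
    hbase (commute_one_add_pow_pow P k _) j

lemma isPositiveMap_leading (hP : IsPositiveMap P) (hS : IsPositiveMap S)
    (hbase : IsPositiveMap (P ^ (m + k) - (2⁻¹ : ℝ) • S * (1 + P ^ k))) (i j : ℕ) :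
    IsPositiveMap (leading P S m k i j) :=
  IsPositiveMap.sum fun _ _ =>
    (((isPositiveMap_remainder hP hS hbase j).pow _).mul ((hS.smul (by norm_num)).pow j)).mul
      ((hP.pow _).pow _)

lemma norm_remainder_lt_one (hP1 : P 1 = 1) {j : ℕ} (hT : IsPositiveMap (remainder P S m k j))
    {δ : ℝ} (hδ : 0 < δ) (hδ1 : δ ≤ 1) (hSδ : algebraMap ℝ A (δ ^ j) ≤ (S ^ j) 1) :
    ‖remainder P S m k j‖ < 1 := by
  have hT1 : remainder P S m k j 1 ≤ algebraMap ℝ A (1 - δ ^ j) := by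
    rw [remainder_apply_one hP1, map_sub, map_one (algebraMap ℝ A)]
    exact sub_le_sub_left hSδ 1
  calc ‖remainder P S m k j‖ ≤ 1 - δ ^ j :=
        hT.opNorm_le_of_apply_one_le (sub_nonneg.2 (pow_le_one₀ hδ.le hδ1)) hT1
    _ < 1 := sub_lt_self 1 (pow_pos hδ j)

lemma norm_leading_le (hP1 : P 1 = 1) {i j : ℕ} (hL : IsPositiveMap (leading P S m k i j))
    (hT : IsPositiveMap (remainder P S m k j)) : ‖leading P S m k i j‖ ≤ (2⁻¹ : ℝ) ^ j := by
  refine hL.opNorm_le_of_apply_one_le (by positivity) ?_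
  rw [leading_apply_one hP1, Algebra.algebraMap_eq_smul_one]
  gcongr
  exact sub_le_self _ ((hT.pow i) 1 zero_le_one)

end ZeroTwoLaw

theorem zero_two_law_decomposition_general {A : Type*} [NormedRing A] [StarRing A] [CStarRing A]
    [CompleteSpace A] [NormedAlgebra ℂ A] [StarModule ℂ A]
    [PartialOrder A] [StarOrderedRing A]
    (P : A →L[ℂ] A) (hP1 : P 1 = 1) (hPpos : ∀ x : A, 0 ≤ x → 0 ≤ P x)
    (m k : ℕ)
    (S : A →L[ℂ] A) (hSpos : ∀ x : A, 0 ≤ x → 0 ≤ S x) (hS1 : IsUnit (S 1))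
    (h1 : ∀ x : A, 0 ≤ x → S x ≤ (P ^ (m + k)) x)
    (h2 : ∀ x : A, 0 ≤ x → S x ≤ (P ^ m) x) :
    ∃ (S' : ℕ → ℕ → (A →L[ℂ] A)) (T : ℕ → (A →L[ℂ] A)),
      ∀ i j : ℕ, 1 ≤ i → 1 ≤ j →
        (∀ x : A, 0 ≤ x → 0 ≤ S' i j x) ∧
        (∀ x : A, 0 ≤ x → 0 ≤ T j x) ∧
        P ^ (i * j * (m + k)) = S' i j * (1 + P ^ k) ^ j + (T j) ^ i ∧
        IsUnit (S' i j 1) ∧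
        ‖S' i j‖ ≤ (2 : ℝ) ^ (-(j : ℤ)) ∧
        ‖T j‖ < 1 := by
  let _ : CStarAlgebra A := {}
  have hbase := ZeroTwoLaw.isPositiveMap_sub_half_mul hPpos h1 h2
  have hT := ZeroTwoLaw.isPositiveMap_remainder hPpos hSpos hbase
  have hL := ZeroTwoLaw.isPositiveMap_leading hPpos hSpos hbase
  obtain ⟨δ, hδ, hδ1, hSδ⟩ := IsPositiveMap.exists_algebraMap_pow_le_pow_apply_one hSpos hS1
  have hTnorm : ∀ j, ‖ZeroTwoLaw.remainder P S m k j‖ < 1 := fun j =>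
    ZeroTwoLaw.norm_remainder_lt_one hP1 (hT j) hδ hδ1 (hSδ j)
  refine ⟨ZeroTwoLaw.leading P S m k, ZeroTwoLaw.remainder P S m k, fun i j hi _ =>
    ⟨hL i j, hT j, ZeroTwoLaw.pow_eq_leading_mul_add_remainder_pow i j,
      ZeroTwoLaw.isUnit_leading_apply_one hP1 hi (hTnorm j), ?_, hTnorm j⟩⟩
  simpa [zpow_neg, inv_pow] using ZeroTwoLaw.norm_leading_le hP1 (hL i j) (hT j)

/-- Decomposition (2.4) in the proof of the 0-2 law: with `h = m + k`, for all `i, j ≥ 1`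
there are bounded positive maps `S_{ij}`, `T_j` with `S_{ij} 1` invertible,
`P^(i·j·h) = S_{ij} ∘ (id + P^k)^j + (T_j)^i`, `‖S_{ij}‖ ≤ 2⁻ʲ` and `‖T_j‖ < 1`. -/
theorem zero_two_law_decomposition {A : Type*} [NormedRing A] [StarRing A] [CStarRing A]
    [CompleteSpace A] [NormedAlgebra ℂ A] [StarModule ℂ A]
    [PartialOrder A] [StarOrderedRing A]
    (P : A →L[ℂ] A) (hP1 : P 1 = 1) (hPpos : ∀ x : A, 0 ≤ x → 0 ≤ P x)
    (m k : ℕ) (hm : 1 ≤ m) (hk : 1 ≤ k)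
    (S : A →L[ℂ] A) (hSpos : ∀ x : A, 0 ≤ x → 0 ≤ S x) (hS1 : IsUnit (S 1))
    (h1 : ∀ x : A, 0 ≤ x → S x ≤ (P ^ (m + k)) x)
    (h2 : ∀ x : A, 0 ≤ x → S x ≤ (P ^ m) x) :
    ∃ (S' : ℕ → ℕ → (A →L[ℂ] A)) (T : ℕ → (A →L[ℂ] A)),
      ∀ i j : ℕ, 1 ≤ i → 1 ≤ j →
        (∀ x : A, 0 ≤ x → 0 ≤ S' i j x) ∧
        (∀ x : A, 0 ≤ x → 0 ≤ T j x) ∧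
        P ^ (i * j * (m + k)) = S' i j * (1 + P ^ k) ^ j + (T j) ^ i ∧
        IsUnit (S' i j 1) ∧
        ‖S' i j‖ ≤ (2 : ℝ) ^ (-(j : ℤ)) ∧
        ‖T j‖ < 1 :=
  zero_two_law_decomposition_general P hP1 hPpos m k S hSpos hS1 h1 h2
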